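/- arXiv:2302.02059 — 4 statements merged into one kernel-verified Lean document; each statement's English description precedes it below -/
import Mathlib

section
/- For every positive integer N, every real number β with 0 < β < 1/(N+1), and every m ∈ ℤ_+, there exist infinitely many translation vectors t = (t_0, t_1, …, t_m) ∈ ℝ^{m+1} with 0 = t_0 < t_1 < … < t_m such that Γ_t = ⋃_{j=0}^m (Γ + t_j) is a self-similar set. -/
noncomputable section

namespace HSCantor

/-- A `D`-coding of `x`: a digit sequence `c` with digits in `D ⊆ ℤ` such that
`x = (1-β)/N · Σ_{k=1}^∞ c_k β^{k-1}` (here indexed from `k = 0`). -/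
def IsCoding (N : ℕ) (β : ℝ) (D : Set ℤ) (x : ℝ) (c : ℕ → ℤ) : Prop :=
  (∀ k, c k ∈ D) ∧ x = (1 - β) / N * ∑' k : ℕ, (c k : ℝ) * β ^ k

/-- The set `Γ_{β,D}` for a digit set `D ⊆ ℤ`. -/
def cantorD (N : ℕ) (β : ℝ) (D : Set ℤ) : Set ℝ := { x | ∃ c, IsCoding N β D x c }

/-- The homogeneous symmetric Cantor set `Γ = Γ_{β,{0,1,…,N}}`. -/
def Gamma (N : ℕ) (β : ℝ) : Set ℝ := cantorD N β (Set.Icc 0 (N : ℤ))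

/-- `E ⊆ ℝ` is a self-similar set: it is nonempty, compact, and is the union of its
images under finitely many contracting similitudes `x ↦ r x + b`, `0 < |r| < 1`. -/
def IsSelfSimilar (E : Set ℝ) : Prop :=
  E.Nonempty ∧ IsCompact E ∧ ∃ F : Finset (ℝ × ℝ),
    (∀ p ∈ F, 0 < |p.1| ∧ |p.1| < 1) ∧
    E = ⋃ p ∈ F, (fun x => p.1 * x + p.2) '' E

/-- `Γ_t = ⋃_{j=0}^m (Γ + t_j)`. -/
def GammaT (N : ℕ) (β : ℝ) {m : ℕ} (t : Fin (m + 1) → ℝ) : Set ℝ :=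
  ⋃ j, (fun x => x + t j) '' Gamma N β

/-- The set `T = ⋃_{n≥1} { (1-β)/N · Σ_{k=1}^n j_k β^{-k} : j_k ∈ {0,…,N} }`. -/
def Tset (N : ℕ) (β : ℝ) : Set ℝ :=
  { x | ∃ n : ℕ, 1 ≤ n ∧ ∃ c : ℕ → ℕ, (∀ k, c k ≤ N) ∧
      x = (1 - β) / N * ∑ k ∈ Finset.Icc 1 n, (c k : ℝ) * β ^ (-(k : ℤ)) }

/-- `d` is a digit representation of the translation vector `t` with `τ` digits:
`t_j = (1-β)/N · Σ_{k=1}^τ d_{j,k} β^{-k}` with all digits in `{0,…,N}`. -/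
def IsDigitRep (N : ℕ) (β : ℝ) {m : ℕ} (t : Fin (m + 1) → ℝ) (τ : ℕ)
    (d : Fin (m + 1) → ℕ → ℕ) : Prop :=
  (∀ j k, d j k ≤ N) ∧
    ∀ j, t j = (1 - β) / N * ∑ k ∈ Finset.Icc 1 τ, (d j k : ℝ) * β ^ (-(k : ℤ))

/-- `d` is a digit representation of `t` with `τ = τ_t` digits, `τ_t` minimal. -/
def IsMinimalRep (N : ℕ) (β : ℝ) {m : ℕ} (t : Fin (m + 1) → ℝ) (τ : ℕ)
    (d : Fin (m + 1) → ℕ → ℕ) : Prop :=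
  IsDigitRep N β t τ d ∧ ∀ τ' < τ, ∀ d', ¬ IsDigitRep N β t τ' d'

/-- `s_k = max_{0 ≤ j ≤ m} t_{j,k}`. -/
def digitSup {m : ℕ} (d : Fin (m + 1) → ℕ → ℕ) (k : ℕ) : ℕ :=
  Finset.univ.sup fun j => d j k

/-- Words of length `n` over the alphabet `{0,1,…,N}`, as lists of naturals. -/
def Words (N n : ℕ) : Set (List ℕ) := { w | w.length = n ∧ ∀ x ∈ w, x ≤ N }

/-- `Ω_t^n`: words `i_1 … i_n ∈ {0,…,N}^n` with `i_{n+1-k} ≤ N - s_k` for `1 ≤ k ≤ τ`.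
(A list `w = [i_1, …, i_n]` satisfies `i_{n+1-k} = w.getD (n-k) 0`.) -/
def Omega (N τ : ℕ) (s : ℕ → ℕ) (n : ℕ) : Set (List ℕ) :=
  { w | w ∈ Words N n ∧ ∀ k, 1 ≤ k → k ≤ τ → w.getD (n - k) 0 + s k ≤ N }

/-- `Ω̂_t^n`: words `i_1 … i_n ∈ {0,…,N}^n` with `i_{n+1-k} ≥ s_k` for `1 ≤ k ≤ τ`. -/
def OmegaHat (N τ : ℕ) (s : ℕ → ℕ) (n : ℕ) : Set (List ℕ) :=
  { w | w ∈ Words N n ∧ ∀ k, 1 ≤ k → k ≤ τ → s k ≤ w.getD (n - k) 0 }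

/-- `W_t^τ = A_t^τ ∪ Â_t^τ`: words obtained from a word in `Ω_t^τ` (resp. `Ω̂_t^τ`)
by adding (resp. subtracting) the digits of some `t_j` to the last `τ` positions. -/
def Wset (N : ℕ) {m : ℕ} (τ : ℕ) (d : Fin (m + 1) → ℕ → ℕ) : Set (List ℕ) :=
  { v | ∃ w ∈ Omega N τ (digitSup d) τ, ∃ j : Fin (m + 1),
      v = List.ofFn fun idx : Fin τ => w.getD idx 0 + d j (τ - (idx : ℕ)) } ∪
  { v | ∃ w ∈ OmegaHat N τ (digitSup d) τ, ∃ j : Fin (m + 1),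
      v = List.ofFn fun idx : Fin τ => w.getD idx 0 - d j (τ - (idx : ℕ)) }

/-- The symbolic admissibility condition:
`⋃_{n=τ}^ℓ {0,…,N}^{n-τ} × W_t^τ × {0,…,N}^{ℓ-n} = {0,…,N}^ℓ` for some `ℓ ≥ τ`. -/
def AdmissibleWith (N : ℕ) {m : ℕ} (τ : ℕ) (d : Fin (m + 1) → ℕ → ℕ) : Prop :=
  ∃ ℓ, τ ≤ ℓ ∧
    (⋃ n ∈ Finset.Icc τ ℓ,
      { z : List ℕ | ∃ u ∈ Words N (n - τ), ∃ w ∈ Wset N τ d, ∃ v ∈ Words N (ℓ - n),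
          z = u ++ w ++ v }) = Words N ℓ

/-- `t` is an admissible translation vector. -/
def IsAdmissible (N : ℕ) (β : ℝ) {m : ℕ} (t : Fin (m + 1) → ℝ) : Prop :=
  (∀ j, t j ∈ Tset N β) ∧
    ∃ τ d, IsMinimalRep N β t τ d ∧ AdmissibleWith N τ d

/-- The vertex set `V_t = {0,…,N}^τ \ W_t^τ` of the directed graph `G_t`. -/
def Vset (N : ℕ) {m : ℕ} (τ : ℕ) (d : Fin (m + 1) → ℕ → ℕ) : Set (List ℕ) :=
  Words N τ \ Wset N τ d

/-- The graph on `V` with an edge `i → j` iff `i_2 … i_τ = j_1 … j_{τ-1}` has a cycle: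
a directed path of positive length starting and ending at the same vertex. -/
def HasCycle (V : Set (List ℕ)) : Prop :=
  ∃ (L : ℕ) (p : ℕ → List ℕ), 0 < L ∧ (∀ i ≤ L, p i ∈ V) ∧
    (∀ i < L, (p i).drop 1 = (p (i + 1)).dropLast) ∧ p 0 = p L

open Classical in
/-- The adjacency matrix of the directed graph `G_t`, indexed by all words of length `τ`
over `{0,…,N}`; its `(i,j)` entry is `1` exactly when `i, j ∈ V_t` and there is a
directed edge `i → j`, and the rows and columns outside `V_t` are zero. -/
def adjMat (N τ : ℕ) (V : Set (List ℕ)) :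
    Matrix (Fin τ → Fin (N + 1)) (Fin τ → Fin (N + 1)) ℕ :=
  fun i j =>
    if (List.ofFn fun k => (i k : ℕ)) ∈ V ∧ (List.ofFn fun k => (j k : ℕ)) ∈ V ∧
        (List.ofFn fun k => (i k : ℕ)).drop 1 = (List.ofFn fun k => (j k : ℕ)).dropLast
    then 1 else 0

/-- `φ_i(x) = βx + i(1-β)/N`. -/
def phi (N : ℕ) (β : ℝ) (i : ℕ) (x : ℝ) : ℝ := β * x + i * (1 - β) / N

/-- `φ_{i_1 … i_n} = φ_{i_1} ∘ ⋯ ∘ φ_{i_n}`. -/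
def phiWord (N : ℕ) (β : ℝ) (w : List ℕ) (x : ℝ) : ℝ := w.foldr (phi N β) x

/-- The conjugate translation vector `t̂_j = t_m - t_{m-j}`. -/
def conj {m : ℕ} (t : Fin (m + 1) → ℝ) : Fin (m + 1) → ℝ :=
  fun j => t (Fin.last m) - t ⟨m - (j : ℕ), Nat.lt_succ_of_le (Nat.sub_le m j)⟩

/-!
Put `D = (1-β)/N`, `τ = ⌊log₂ m⌋ + 1` and `n ≥ τ`, and let `t_j = β^{-n} D Σ_{i<τ} b_i(j) β^i`,
where `b(j)` is the binary expansion of `j` read from its most significant digit. Since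
`β < 1/2`, `t` is strictly increasing, and different `n` give different vectors.

Cutting off the first `n` digits writes `Γ + t_j` as the union of the cylinders
`t_j + D Σ_{i<n} w_i β^i + β^n Γ` over words `w ∈ {0,…,N}^n`, while `β^n (Γ + t_j')` is the
cylinder of the 0-1 word `b(j')`. If `w 0 ≠ N`, write `w = u + b(j')` with `b_i(j') = 1` exactly
at the letters `w_i = N` among the first `τ`; as `b_0(j') = 0` we have `j' < 2^(τ-1) ≤ m + 1`, so
the cylinder of `w` is covered by the image of `Γ + t_j'` under `x ↦ β^n x + t_j + D Σ u_i β^i`.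
If `w 0 = N`, the symmetry `Γ = 1 - Γ` does the same job with `w = u - b(j')` and an
orientation-reversing map. Conversely, as `u` avoids the letter `N` (resp. `0`) in its first
`τ` places, these maps send `Γ_t` into itself.
-/

open Finset

def digitSum (β : ℝ) (w : ℕ → ℕ) (n : ℕ) : ℝ := ∑ i ∈ range n, (w i : ℝ) * β ^ i

section DigitSum

variable {β : ℝ} {w v : ℕ → ℕ} {n : ℕ}

@[simp]
lemma digitSum_zero : digitSum β 0 n = 0 := by
  simp [digitSum]

lemma digitSum_congr (h : ∀ i < n, w i = v i) : digitSum β w n = digitSum β v n :=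
  sum_congr rfl fun i hi => by rw [h i (mem_range.mp hi)]

lemma digitSum_add : digitSum β (w + v) n = digitSum β w n + digitSum β v n := by
  simp only [digitSum, ← sum_add_distrib, Pi.add_apply, Nat.cast_add, add_mul]

lemma digitSum_sub (h : ∀ i < n, v i ≤ w i) :
    digitSum β (w - v) n = digitSum β w n - digitSum β v n := by
  rw [digitSum, digitSum, digitSum, ← sum_sub_distrib]
  exact sum_congr rfl fun i hi => by
    rw [Pi.sub_apply, Nat.cast_sub (h i (mem_range.mp hi)), sub_mul]

lemma digitSum_of_le {τ : ℕ} (hτn : τ ≤ n) (hw : ∀ i, τ ≤ i → w i = 0) :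
    digitSum β w n = digitSum β w τ :=
  (sum_subset (range_subset_range.mpr hτn) fun i _ hi => by
    rw [hw i (by simpa using hi), Nat.cast_zero, zero_mul]).symm

lemma digitSum_succ : digitSum β w (n + 1) = digitSum β w n + w n * β ^ n :=
  sum_range_succ _ _

end DigitSum

section Coding

variable {N : ℕ} {β : ℝ}

lemma mem_Gamma_iff {x : ℝ} :
    x ∈ Gamma N β ↔
      ∃ c : ℕ → ℕ, (∀ k, c k ≤ N) ∧ x = (1 - β) / N * ∑' k, (c k : ℝ) * β ^ k := by
  constructor
  · rintro ⟨c, hc, rfl⟩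
    refine ⟨fun k => (c k).toNat, fun k => Int.toNat_le.mpr (hc k).2, ?_⟩
    congr 1
    refine tsum_congr fun k => ?_
    rw [← Int.cast_natCast, Int.toNat_of_nonneg (hc k).1]
  · rintro ⟨c, hc, rfl⟩
    exact ⟨fun k => c k, fun k => ⟨Int.natCast_nonneg _, Int.ofNat_le.mpr (hc k)⟩, by simp⟩

lemma zero_mem_Gamma : (0 : ℝ) ∈ Gamma N β :=
  mem_Gamma_iff.mpr ⟨fun _ => 0, fun _ => N.zero_le, by simp⟩

lemma summable_digits (hβ0 : 0 ≤ β) (hβ1 : β < 1) {c : ℕ → ℕ} (hc : ∀ k, c k ≤ N) :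
    Summable fun k => (c k : ℝ) * β ^ k :=
  ((summable_geometric_of_lt_one hβ0 hβ1).mul_left (N : ℝ)).of_nonneg_of_le
    (fun k => by positivity) fun k => mul_le_mul_of_nonneg_right (by exact_mod_cast hc k)
      (by positivity)

lemma tsum_digits_eq_digitSum_add (hβ0 : 0 ≤ β) (hβ1 : β < 1) {c : ℕ → ℕ} (hc : ∀ k, c k ≤ N)
    (n : ℕ) :
    ∑' k, (c k : ℝ) * β ^ k = digitSum β c n + β ^ n * ∑' k, (c (k + n) : ℝ) * β ^ k := by
  rw [← (summable_digits hβ0 hβ1 hc).sum_add_tsum_nat_add n, digitSum, ← tsum_mul_left]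
  congr 1
  exact tsum_congr fun k => by rw [pow_add]; ring

lemma isCompact_Gamma (hβ0 : 0 ≤ β) (hβ1 : β < 1) : IsCompact (Gamma N β) := by
  have hrange : Gamma N β = Set.range fun c : ℕ → Fin (N + 1) =>
      (1 - β) / N * ∑' k, ((c k : ℕ) : ℝ) * β ^ k := by
    ext x
    rw [mem_Gamma_iff]
    constructor
    · rintro ⟨c, hc, rfl⟩
      exact ⟨fun k => ⟨c k, Nat.lt_succ_of_le (hc k)⟩, rfl⟩
    · rintro ⟨c, rfl⟩
      exact ⟨fun k => c k, fun k => Nat.le_of_lt_succ (c k).isLt, rfl⟩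
  rw [hrange]
  refine isCompact_range (continuous_const.mul (continuous_tsum (fun k => ?_)
    ((summable_geometric_of_lt_one hβ0 hβ1).mul_left (N : ℝ)) fun k c => ?_))
  · exact ((continuous_of_discreteTopology (f := fun v : Fin (N + 1) => ((v : ℕ) : ℝ))).comp
      (continuous_apply k)).mul continuous_const
  · rw [Real.norm_eq_abs, abs_of_nonneg (by positivity)]
    exact mul_le_mul_of_nonneg_right (by exact_mod_cast Nat.le_of_lt_succ (c k).isLt)
      (by positivity)

lemma one_sub_mem_Gamma (hN : 0 < N) (hβ0 : 0 ≤ β) (hβ1 : β < 1) {γ : ℝ} (hγ : γ ∈ Gamma N β) :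
    1 - γ ∈ Gamma N β := by
  obtain ⟨c, hc, rfl⟩ := mem_Gamma_iff.mp hγ
  refine mem_Gamma_iff.mpr ⟨fun k => N - c k, fun k => N.sub_le _, ?_⟩
  have hsplit : ∑' k, ((N - c k : ℕ) : ℝ) * β ^ k =
      ∑' k, (N : ℝ) * β ^ k - ∑' k, (c k : ℝ) * β ^ k := by
    rw [← ((summable_geometric_of_lt_one hβ0 hβ1).mul_left (N : ℝ)).tsum_sub
      (summable_digits hβ0 hβ1 hc)]
    exact tsum_congr fun k => by rw [Nat.cast_sub (hc k), sub_mul]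
  rw [hsplit, tsum_mul_left, tsum_geometric_of_lt_one hβ0 hβ1]
  have : (N : ℝ) ≠ 0 := by positivity
  have : 1 - β ≠ 0 := by linarith
  field_simp

lemma mem_Gamma_iff_cylinder (hβ0 : 0 ≤ β) (hβ1 : β < 1) (n : ℕ) {γ : ℝ} :
    γ ∈ Gamma N β ↔ ∃ w : ℕ → ℕ, (∀ i < n, w i ≤ N) ∧ ∃ γ' ∈ Gamma N β,
      γ = β ^ n * γ' + (1 - β) / N * digitSum β w n := by
  constructor
  · intro hγ
    obtain ⟨c, hc, rfl⟩ := mem_Gamma_iff.mp hγ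
    refine ⟨c, fun i _ => hc i, _,
      mem_Gamma_iff.mpr ⟨fun k => c (k + n), fun k => hc _, rfl⟩, ?_⟩
    rw [tsum_digits_eq_digitSum_add hβ0 hβ1 hc n]
    ring
  · rintro ⟨w, hw, γ', hγ', rfl⟩
    obtain ⟨c, hc, rfl⟩ := mem_Gamma_iff.mp hγ'
    set c' : ℕ → ℕ := fun k => if k < n then w k else c (k - n)
    have hc' : ∀ k, c' k ≤ N := fun k => by
      simp only [c']; split_ifs with h
      exacts [hw k h, hc _]
    refine mem_Gamma_iff.mpr ⟨c', hc', ?_⟩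
    rw [tsum_digits_eq_digitSum_add hβ0 hβ1 hc' n,
      digitSum_congr (fun i hi => if_pos hi : ∀ i < n, c' i = w i)]
    simp only [c', if_neg (Nat.not_lt.mpr (Nat.le_add_left n _)), Nat.add_sub_cancel]
    ring

end Coding

section SelfSimilar

variable {N m : ℕ} {β : ℝ} {t : Fin (m + 1) → ℝ}

lemma mem_GammaT_iff {x : ℝ} : x ∈ GammaT N β t ↔ ∃ j, ∃ γ ∈ Gamma N β, x = γ + t j := by
  simp only [GammaT, Set.mem_iUnion, Set.mem_image, eq_comm]

lemma add_mem_GammaT {γ : ℝ} (hγ : γ ∈ Gamma N β) (j : Fin (m + 1)) :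
    γ + t j ∈ GammaT N β t :=
  mem_GammaT_iff.mpr ⟨j, γ, hγ, rfl⟩

lemma isCompact_GammaT (hβ0 : 0 ≤ β) (hβ1 : β < 1) : IsCompact (GammaT N β t) :=
  isCompact_iUnion fun _ => (isCompact_Gamma hβ0 hβ1).image (continuous_add_const _)

lemma finite_digitSums (β : ℝ) (N n : ℕ) :
    {s | ∃ u : ℕ → ℕ, (∀ i < n, u i ≤ N) ∧ s = digitSum β u n}.Finite := by
  refine (Set.finite_range fun v : Fin n → Fin (N + 1) =>
    ∑ i, ((v i : ℕ) : ℝ) * β ^ (i : ℕ)).subset ?_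
  rintro _ ⟨u, hu, rfl⟩
  exact ⟨fun i => ⟨u i, Nat.lt_succ_of_le (hu i i.isLt)⟩,
    Fin.sum_univ_eq_sum_range (fun i => (u i : ℝ) * β ^ i) n⟩

def cylinderMaps (N : ℕ) (β : ℝ) (t : Fin (m + 1) → ℝ) (τ n : ℕ) : Set (ℝ × ℝ) :=
  {f | ∃ j u, (∀ i < n, u i ≤ N) ∧ (∀ i < τ, u i < N) ∧
      f = (β ^ n, t j + (1 - β) / N * digitSum β u n)} ∪
  {f | ∃ j u, (∀ i < n, u i ≤ N) ∧ (∀ i < τ, 0 < u i) ∧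
      f = (-β ^ n, t j + (1 - β) / N * digitSum β u n + β ^ n)}

variable (N β t) in
lemma finite_cylinderMaps (τ n : ℕ) : (cylinderMaps N β t τ n).Finite := by
  refine ((Set.finite_univ.image2 (fun j s => (β ^ n, t j + (1 - β) / N * s))
    (finite_digitSums β N n)).union (Set.finite_univ.image2
      (fun j s => (-β ^ n, t j + (1 - β) / N * s + β ^ n)) (finite_digitSums β N n))).subset ?_
  rintro _ (⟨j, u, hu, -, rfl⟩ | ⟨j, u, hu, -, rfl⟩)
  · exact Or.inl ⟨j, trivial, _, ⟨u, hu, rfl⟩, rfl⟩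
  · exact Or.inr ⟨j, trivial, _, ⟨u, hu, rfl⟩, rfl⟩

variable {τ n : ℕ} {B : Fin (m + 1) → ℕ → ℕ}

lemma mul_add_digitSum_mem_GammaT (hβ0 : 0 ≤ β) (hβ1 : β < 1) (hB : ∀ j i, B j i ≤ 1)
    (hBτ : ∀ j i, τ ≤ i → B j i = 0)
    (ht : ∀ j, β ^ n * t j = (1 - β) / N * digitSum β (B j) n)
    {u : ℕ → ℕ} (hu : ∀ i < n, u i ≤ N) (huτ : ∀ i < τ, u i < N) (j : Fin (m + 1))
    {x : ℝ} (hx : x ∈ GammaT N β t) :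
    β ^ n * x + (t j + (1 - β) / N * digitSum β u n) ∈ GammaT N β t := by
  obtain ⟨j', γ, hγ, rfl⟩ := mem_GammaT_iff.mp hx
  have hword : ∀ i < n, (u + B j') i ≤ N := fun i hi => by
    rcases lt_or_ge i τ with hiτ | hiτ
    · have := hB j' i; have := huτ i hiτ; simp only [Pi.add_apply]; omega
    · simpa [hBτ j' i hiτ] using hu i hi
  have hmem := (mem_Gamma_iff_cylinder hβ0 hβ1 n).mpr ⟨u + B j', hword, γ, hγ, rfl⟩
  convert add_mem_GammaT hmem j using 1
  rw [digitSum_add, mul_add ((1 - β) / N), ← ht j']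
  ring

lemma neg_mul_add_digitSum_mem_GammaT (hN : 0 < N) (hβ0 : 0 ≤ β) (hβ1 : β < 1)
    (hB : ∀ j i, B j i ≤ 1) (hBτ : ∀ j i, τ ≤ i → B j i = 0)
    (ht : ∀ j, β ^ n * t j = (1 - β) / N * digitSum β (B j) n)
    {u : ℕ → ℕ} (hu : ∀ i < n, u i ≤ N) (huτ : ∀ i < τ, 0 < u i) (j : Fin (m + 1))
    {x : ℝ} (hx : x ∈ GammaT N β t) :
    -β ^ n * x + (t j + (1 - β) / N * digitSum β u n + β ^ n) ∈ GammaT N β t := by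
  obtain ⟨j', γ, hγ, rfl⟩ := mem_GammaT_iff.mp hx
  have hBu : ∀ i < n, B j' i ≤ u i := fun i hi => by
    rcases lt_or_ge i τ with hiτ | hiτ
    · have := hB j' i; have := huτ i hiτ; omega
    · simp [hBτ j' i hiτ]
  have hword : ∀ i < n, (u - B j') i ≤ N := fun i hi => (Nat.sub_le _ _).trans (hu i hi)
  have hmem := (mem_Gamma_iff_cylinder hβ0 hβ1 n).mpr
    ⟨u - B j', hword, 1 - γ, one_sub_mem_Gamma hN hβ0 hβ1 hγ, rfl⟩
  convert add_mem_GammaT hmem j using 1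
  rw [digitSum_sub hBu, mul_sub ((1 - β) / N), ← ht j']
  ring

lemma GammaT_subset_iUnion_cylinderMaps (hN : 0 < N) (hβ0 : 0 ≤ β) (hβ1 : β < 1) (hτn : τ ≤ n)
    (hBτ : ∀ j i, τ ≤ i → B j i = 0)
    (ht : ∀ j, β ^ n * t j = (1 - β) / N * digitSum β (B j) n)
    (hsurj : ∀ y : ℕ → ℕ, (∀ i, y i ≤ 1) → y 0 = 0 → ∃ j, ∀ i < τ, B j i = y i) :
    GammaT N β t ⊆ ⋃ f ∈ cylinderMaps N β t τ n, (fun x => f.1 * x + f.2) '' GammaT N β t := by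
  intro z hz
  obtain ⟨j, γ, hγ, rfl⟩ := mem_GammaT_iff.mp hz
  obtain ⟨w, hw, γ', hγ', rfl⟩ := (mem_Gamma_iff_cylinder hβ0 hβ1 n).mp hγ
  simp only [Set.mem_iUnion, Set.mem_image, exists_prop]
  have hB_of : ∀ y : ℕ → ℕ, (∀ i, τ ≤ i → y i = 0) → ∀ j', (∀ i < τ, B j' i = y i) →
      ∀ i < n, B j' i = y i := fun y hy j' hj' i _ => by
    rcases lt_or_ge i τ with hiτ | hiτ
    exacts [hj' i hiτ, by rw [hBτ j' i hiτ, hy i hiτ]]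
  by_cases hw0 : w 0 = N
  · set y : ℕ → ℕ := fun i => if i < τ ∧ w i = 0 then 1 else 0 with hy
    obtain ⟨j', hj'⟩ := hsurj y (fun i => by simp only [hy]; split_ifs <;> omega)
      (by simp [hy, hw0, hN.ne'])
    have hBy := digitSum_congr (β := β)
      (hB_of y (fun i hi => by simp [hy, not_lt.mpr hi]) j' hj')
    refine ⟨_, Or.inr ⟨j, w + y, fun i hi => ?_, fun i hi => ?_, rfl⟩,
      1 - γ' + t j', add_mem_GammaT (one_sub_mem_Gamma hN hβ0 hβ1 hγ') j', ?_⟩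
    · have := hw i hi; simp only [hy, Pi.add_apply]; split_ifs <;> omega
    · simp only [hy, Pi.add_apply]; split_ifs <;> omega
    · rw [digitSum_add, ← hBy, mul_add ((1 - β) / N), ← ht j']
      ring
  · set y : ℕ → ℕ := fun i => if i < τ ∧ w i = N then 1 else 0 with hy
    obtain ⟨j', hj'⟩ := hsurj y (fun i => by simp only [hy]; split_ifs <;> omega)
      (by simp [hy, hw0])
    have hBy := digitSum_congr (β := β)
      (hB_of y (fun i hi => by simp [hy, not_lt.mpr hi]) j' hj')
    have hyw : ∀ i < n, y i ≤ w i := fun i _ => by simp only [hy]; split_ifs <;> omega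
    refine ⟨_, Or.inl ⟨j, w - y, fun i hi => ?_, fun i hi => ?_, rfl⟩,
      γ' + t j', add_mem_GammaT hγ' j', ?_⟩
    · exact (Nat.sub_le _ _).trans (hw i hi)
    · have := hw i (hi.trans_le hτn); simp only [hy, Pi.sub_apply]; split_ifs <;> omega
    · rw [digitSum_sub hyw, ← hBy, mul_sub ((1 - β) / N), ← ht j']
      ring

theorem isSelfSimilar_GammaT (hN : 0 < N) (hβ0 : 0 < β) (hβ1 : β < 1) (hn : 0 < n)
    (hτn : τ ≤ n) (hB : ∀ j i, B j i ≤ 1) (hBτ : ∀ j i, τ ≤ i → B j i = 0)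
    (ht : ∀ j, β ^ n * t j = (1 - β) / N * digitSum β (B j) n)
    (hsurj : ∀ y : ℕ → ℕ, (∀ i, y i ≤ 1) → y 0 = 0 → ∃ j, ∀ i < τ, B j i = y i) :
    IsSelfSimilar (GammaT N β t) := by
  have hβn : 0 < β ^ n := pow_pos hβ0 n
  have hβn1 : β ^ n < 1 := pow_lt_one₀ hβ0.le hβ1 hn.ne'
  refine ⟨⟨_, add_mem_GammaT zero_mem_Gamma 0⟩, isCompact_GammaT hβ0.le hβ1,
    (finite_cylinderMaps N β t τ n).toFinset, ?_, ?_⟩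
  · rintro f hf
    rcases (Set.Finite.mem_toFinset _).mp hf with ⟨j, u, -, -, rfl⟩ | ⟨j, u, -, -, rfl⟩ <;>
      simpa only [abs_neg, abs_of_pos hβn] using ⟨hβn, hβn1⟩
  · simp only [Set.Finite.mem_toFinset]
    refine (GammaT_subset_iUnion_cylinderMaps hN hβ0.le hβ1 hτn hBτ ht hsurj).antisymm
      (Set.iUnion₂_subset fun f hf => ?_)
    rintro _ ⟨x, hx, rfl⟩
    rcases hf with ⟨j, u, hu, huτ, rfl⟩ | ⟨j, u, hu, huτ, rfl⟩
    · exact mul_add_digitSum_mem_GammaT hβ0.le hβ1 hB hBτ ht hu huτ j hx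
    · exact neg_mul_add_digitSum_mem_GammaT hN hβ0.le hβ1 hB hBτ ht hu huτ j hx

end SelfSimilar

section Binary

def binWord (τ j : ℕ) : ℕ → ℕ := fun i => if i < τ then j / 2 ^ (τ - 1 - i) % 2 else 0

variable {τ : ℕ}

lemma binWord_le_one (j i : ℕ) : binWord τ j i ≤ 1 := by
  unfold binWord; split_ifs <;> omega

lemma binWord_of_le (j : ℕ) {i : ℕ} (hi : τ ≤ i) : binWord τ j i = 0 := by
  simp [binWord, not_lt.mpr hi]

lemma binWord_zero : binWord τ 0 = 0 := by
  funext i; simp [binWord]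

lemma digitSum_binWord_succ (β : ℝ) (j : ℕ) :
    digitSum β (binWord (τ + 1) j) (τ + 1) =
      digitSum β (binWord τ (j / 2)) τ + (j % 2 : ℕ) * β ^ τ := by
  rw [digitSum_succ]
  congr 1
  · refine digitSum_congr fun i hi => ?_
    simp only [binWord, if_pos hi, if_pos (Nat.lt_succ_of_lt hi), Nat.div_div_eq_div_mul]
    rw [show τ + 1 - 1 - i = τ - 1 - i + 1 by omega, pow_succ']
  · simp [binWord]

-- The gap is `β^(τ-1)`, multiplied through by `β` to avoid `τ - 1`; the induction needs this
-- quantitative form, not just the strict inequality.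
lemma digitSum_binWord_gap {β : ℝ} (hβ0 : 0 ≤ β) (hβ : β ≤ 1 / 2) {a b : ℕ} (hab : a < b)
    (hb : b < 2 ^ τ) :
    β ^ τ ≤ β * (digitSum β (binWord τ b) τ - digitSum β (binWord τ a) τ) := by
  induction τ generalizing a b with
  | zero => omega
  | succ τ ih =>
    rw [digitSum_binWord_succ, digitSum_binWord_succ]
    have hβτ : 0 ≤ β ^ τ := pow_nonneg hβ0 τ
    rcases (Nat.div_le_div_right (c := 2) hab.le).eq_or_lt with heq | hlt
    · have ha : a % 2 = 0 := by omega
      have hb : b % 2 = 1 := by omega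
      rw [heq, ha, hb, pow_succ]
      apply le_of_eq
      push_cast
      ring
    · have hgap := ih hlt (by rw [pow_succ] at hb; omega)
      have hbit : -1 ≤ ((b % 2 : ℕ) : ℝ) - (a % 2 : ℕ) := by
        have : ((a % 2 : ℕ) : ℝ) ≤ 1 := by exact_mod_cast (by omega : a % 2 ≤ 1)
        have : (0 : ℝ) ≤ (b % 2 : ℕ) := by positivity
        linarith
      have := mul_le_mul_of_nonneg_left hbit (mul_nonneg hβ0 hβτ)
      calc β ^ (τ + 1) ≤ β ^ τ - β * β ^ τ := by rw [pow_succ]; nlinarith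
        _ ≤ _ := by nlinarith

lemma digitSum_binWord_lt {β : ℝ} (hβ0 : 0 < β) (hβ : β ≤ 1 / 2) {a b : ℕ} (hab : a < b)
    (hb : b < 2 ^ τ) : digitSum β (binWord τ a) τ < digitSum β (binWord τ b) τ := by
  have := digitSum_binWord_gap hβ0.le hβ hab hb
  have : 0 < β * (digitSum β (binWord τ b) τ - digitSum β (binWord τ a) τ) :=
    (pow_pos hβ0 τ).trans_le this
  nlinarith

lemma exists_binWord_eq {y : ℕ → ℕ} (hy : ∀ i, y i ≤ 1) (hy0 : y 0 = 0) :
    ∃ j < 2 ^ (τ - 1), ∀ i < τ, binWord τ j i = y i := by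
  rcases τ with _ | σ
  · exact ⟨0, by simp, fun i hi => absurd hi (Nat.not_lt_zero i)⟩
  set j := finFunctionFinEquiv fun k : Fin (σ + 1) =>
    (⟨y (σ - k), Nat.lt_succ_of_le (hy _)⟩ : Fin 2)
  have hbit : ∀ k ≤ σ, (j : ℕ) / 2 ^ k % 2 = y (σ - k) := fun k hk => by
    rw [← finFunctionFinEquiv_symm_apply_val j ⟨k, Nat.lt_succ_of_le hk⟩, Equiv.symm_apply_apply]
  refine ⟨j, ?_, fun i hi => ?_⟩
  · have hj : (j : ℕ) < 2 ^ σ * 2 := by rw [← pow_succ]; exact j.isLt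
    have hlead := hbit σ le_rfl
    rw [Nat.sub_self, hy0] at hlead
    have hlt : (j : ℕ) / 2 ^ σ < 2 := Nat.div_lt_of_lt_mul hj
    simp only [Nat.add_sub_cancel]
    refine (Nat.div_eq_zero_iff_lt (by positivity)).mp ?_
    generalize (j : ℕ) / 2 ^ σ = x at hlead hlt
    omega
  · simp only [binWord, if_pos hi, Nat.add_sub_cancel]
    rw [hbit _ (Nat.sub_le σ i)]
    congr 1; omega

end Binary

section TranslationVectors

def binaryTransVec (N : ℕ) (β : ℝ) (τ n m : ℕ) : Fin (m + 1) → ℝ :=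
  fun j => (β ^ n)⁻¹ * ((1 - β) / N * digitSum β (binWord τ j) τ)

variable {N τ m : ℕ} {β : ℝ}

lemma binaryTransVec_zero (n : ℕ) : binaryTransVec N β τ n m 0 = 0 := by
  simp [binaryTransVec, binWord_zero]

lemma binaryTransVec_strictMono (hN : 0 < N) (hβ0 : 0 < β) (hβ : β ≤ 1 / 2) (hm : m < 2 ^ τ)
    (n : ℕ) : StrictMono (binaryTransVec N β τ n m) := fun a b hab =>
  mul_lt_mul_of_pos_left
    (mul_lt_mul_of_pos_left (digitSum_binWord_lt hβ0 hβ hab (by omega))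
      (div_pos (by linarith) (by exact_mod_cast hN)))
    (inv_pos.mpr (pow_pos hβ0 n))

lemma binaryTransVec_injective (hN : 0 < N) (hβ0 : 0 < β) (hβ : β ≤ 1 / 2) (hm : 1 ≤ m)
    (hmτ : m < 2 ^ τ) : Function.Injective fun n => binaryTransVec N β τ n m := by
  intro n n' h
  have h1 := congrFun h ⟨1, by omega⟩
  have hpos : 0 < (1 - β) / N * digitSum β (binWord τ 1) τ := by
    have := digitSum_binWord_lt hβ0 hβ zero_lt_one (by omega : 1 < 2 ^ τ)
    rw [binWord_zero, digitSum_zero] at this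
    exact mul_pos (div_pos (by linarith) (by exact_mod_cast hN)) this
  have := mul_right_cancel₀ hpos.ne' h1
  exact pow_right_injective₀ hβ0 (by linarith) (inv_inj.mp this)

lemma isSelfSimilar_GammaT_binaryTransVec (hN : 0 < N) (hβ0 : 0 < β) (hβ1 : β < 1) {n : ℕ}
    (hn : 0 < n) (hτn : τ ≤ n) (hm : 2 ^ (τ - 1) ≤ m + 1) :
    IsSelfSimilar (GammaT N β (binaryTransVec N β τ n m)) := by
  refine isSelfSimilar_GammaT (B := fun j => binWord τ j) hN hβ0 hβ1 hn hτn
    (fun _ _ => binWord_le_one _ _) (fun j _ => binWord_of_le j) (fun j => ?_)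
    fun y hy hy0 => ?_
  · rw [binaryTransVec, digitSum_of_le hτn fun _ => binWord_of_le _, ← mul_assoc,
      mul_inv_cancel₀ (pow_ne_zero n hβ0.ne'), one_mul]
  · obtain ⟨j, hj, hjy⟩ := exists_binWord_eq hy hy0
    exact ⟨⟨j, by omega⟩, hjy⟩

end TranslationVectors

/-- For every positive integer `N`, every `0 < β < 1/(N+1)` and every `m ∈ ℤ_+`, there are
infinitely many translation vectors `t = (t_0,…,t_m)` with `0 = t_0 < t_1 < ⋯ < t_m` such
that `Γ_t = ⋃_{j=0}^m (Γ + t_j)` is a self-similar set. -/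
theorem stmt0 (N : ℕ) (hN : 0 < N) (β : ℝ) (hβ0 : 0 < β) (hβ1 : β < 1 / (N + 1))
    (m : ℕ) (hm : 1 ≤ m) :
    { t : Fin (m + 1) → ℝ | t 0 = 0 ∧ StrictMono t ∧
        IsSelfSimilar (GammaT N β t) }.Infinite := by
  have hβ : β ≤ 1 / 2 := hβ1.le.trans (one_div_le_one_div_of_le two_pos (by
    have : (1 : ℝ) ≤ N := by exact_mod_cast hN
    linarith))
  set τ := Nat.log 2 m + 1
  have hτ : 0 < τ := Nat.succ_pos _
  have hmτ : m < 2 ^ τ := Nat.lt_pow_succ_log_self one_lt_two m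
  have hτm : 2 ^ (τ - 1) ≤ m + 1 := (Nat.pow_log_le_self 2 (by omega)).trans m.le_succ
  refine Set.infinite_of_injective_forall_mem
    ((binaryTransVec_injective hN hβ0 hβ hm hmτ).comp (add_right_injective τ)) fun p =>
      ⟨binaryTransVec_zero _, binaryTransVec_strictMono hN hβ0 hβ hmτ _,
        isSelfSimilar_GammaT_binaryTransVec hN hβ0 (by linarith)
          (hτ.trans_le (Nat.le_add_right τ p)) (Nat.le_add_right τ p) hτm⟩

end HSCantor
end
end

section
/- Let t = (t_0, t_1, …, t_m) ∈ T^{m+1} with 0 = t_0 < t_1 < … < t_m. Then t is an admissible translation vector if and only if the directed graph G_t has no cycle. -/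
noncomputable section

namespace HSCantor

section Aux

lemma zero_of_small_digits (N : ℕ) (β : ℝ) (hβ0 : 0 < β) (hβ1 : β * (N + 1) < 1) :
    ∀ (τ : ℕ) (e : ℕ → ℤ), (∀ i, |e i| ≤ N) →
      (∑ i ∈ Finset.range τ, (e i : ℝ) * β ^ i) = 0 → ∀ i < τ, e i = 0 := by
  have hb1 : β < 1 := by nlinarith [Nat.cast_nonneg (α := ℝ) N]
  intro τ
  induction τ with
  | zero => intro e _ _ i hi; omega
  | succ n ih =>
    intro e he hsum i hi
    have hgeom : ∀ k : ℕ, ∑ j ∈ Finset.range k, β ^ j ≤ 1 / (1 - β) := by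
      intro k
      have h1 := geom_sum_mul β k
      have h2 : (0:ℝ) ≤ β ^ k := le_of_lt (pow_pos hβ0 k)
      rw [le_div_iff₀ (by linarith)]
      nlinarith
    have hS : |∑ j ∈ Finset.range n, (e (j+1) : ℝ) * β ^ j| ≤ N * (1 / (1 - β)) := by
      calc |∑ j ∈ Finset.range n, (e (j+1) : ℝ) * β ^ j|
          ≤ ∑ j ∈ Finset.range n, |(e (j+1) : ℝ) * β ^ j| := Finset.abs_sum_le_sum_abs _ _
        _ ≤ ∑ j ∈ Finset.range n, (N : ℝ) * β ^ j := by
            apply Finset.sum_le_sum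
            intro j _
            rw [abs_mul, abs_pow, abs_of_pos hβ0]
            have : |(e (j+1) : ℝ)| ≤ N := by exact_mod_cast he (j+1)
            exact mul_le_mul_of_nonneg_right this (le_of_lt (pow_pos hβ0 j))
        _ = (N:ℝ) * ∑ j ∈ Finset.range n, β ^ j := by rw [Finset.mul_sum]
        _ ≤ N * (1 / (1 - β)) := by
            exact mul_le_mul_of_nonneg_left (hgeom n) (Nat.cast_nonneg N)
    have hsplit : (e 0 : ℝ) = -(β * ∑ j ∈ Finset.range n, (e (j+1) : ℝ) * β ^ j) := by
      have := hsum
      rw [Finset.sum_range_succ' (fun i => (e i : ℝ) * β ^ i) n] at this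
      have h2 : ∑ j ∈ Finset.range n, (e (j+1) : ℝ) * β ^ (j+1)
          = β * ∑ j ∈ Finset.range n, (e (j+1) : ℝ) * β ^ j := by
        rw [Finset.mul_sum]; apply Finset.sum_congr rfl; intro j _; ring
      rw [h2] at this
      simp at this
      linarith
    have he0 : e 0 = 0 := by
      have habs : |(e 0 : ℝ)| < 1 := by
        rw [hsplit, abs_neg, abs_mul, abs_of_pos hβ0]
        calc β * |∑ j ∈ Finset.range n, (e (j+1) : ℝ) * β ^ j| ≤ β * (N * (1/(1-β))) :=
              mul_le_mul_of_nonneg_left hS (le_of_lt hβ0)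
          _ < 1 := by
              rw [mul_comm (N:ℝ), mul_comm β, div_mul_eq_mul_div, div_mul_eq_mul_div,
                div_lt_iff₀ (by linarith : (0:ℝ) < 1 - β)]
              nlinarith
      have : |e 0| < 1 := by exact_mod_cast habs
      rcases abs_lt.mp this with ⟨h1, h2⟩
      omega
    rcases Nat.eq_zero_or_pos i with h0 | h0
    · rw [h0]; exact he0
    · have hsum' : ∑ j ∈ Finset.range n, ((fun j => e (j+1)) j : ℝ) * β ^ j = 0 := by
        have := hsum
        rw [Finset.sum_range_succ' (fun i => (e i : ℝ) * β ^ i) n] at this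
        have h2 : ∑ j ∈ Finset.range n, (e (j+1) : ℝ) * β ^ (j+1)
            = β * ∑ j ∈ Finset.range n, (e (j+1) : ℝ) * β ^ j := by
          rw [Finset.mul_sum]; apply Finset.sum_congr rfl; intro j _; ring
        rw [h2] at this
        simp only [he0, Int.cast_zero, zero_mul, pow_zero, mul_one, add_zero] at this
        exact (mul_eq_zero.mp this).resolve_left (ne_of_gt hβ0)
      have := ih (fun j => e (j+1)) (fun j => he (j+1)) hsum' (i - 1) (by omega)
      simpa [Nat.sub_add_cancel h0] using this


lemma digits_unique (N : ℕ) (β : ℝ) (hβ0 : 0 < β) (hβ1 : β * (N + 1) < 1) (τ : ℕ)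
    (c c' : ℕ → ℕ) (hc : ∀ k, c k ≤ N) (hc' : ∀ k, c' k ≤ N)
    (h : ∑ k ∈ Finset.Icc 1 τ, (c k : ℝ) * β ^ (-(k:ℤ))
        = ∑ k ∈ Finset.Icc 1 τ, (c' k : ℝ) * β ^ (-(k:ℤ))) :
    ∀ k ∈ Finset.Icc 1 τ, c k = c' k := by
  have hβne : β ≠ 0 := ne_of_gt hβ0
  set e : ℕ → ℤ := fun i => (c (τ - i) : ℤ) - (c' (τ - i) : ℤ) with he_def
  have he : ∀ i, |e i| ≤ N := by
    intro i
    have h1 := hc (τ - i); have h2 := hc' (τ - i)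
    simp only [he_def]
    rw [abs_le]
    constructor <;> [push_cast; push_cast] <;> omega
  have hsum : ∑ i ∈ Finset.range τ, (e i : ℝ) * β ^ i = 0 := by
    have h0 : ∑ k ∈ Finset.Icc 1 τ, ((c k : ℝ) - (c' k : ℝ)) * β ^ (-(k:ℤ)) = 0 := by
      rw [show (0:ℝ) = ∑ k ∈ Finset.Icc 1 τ, (c k : ℝ) * β ^ (-(k:ℤ))
          - ∑ k ∈ Finset.Icc 1 τ, (c' k : ℝ) * β ^ (-(k:ℤ)) by rw [h]; ring,
        ← Finset.sum_sub_distrib]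
      apply Finset.sum_congr rfl; intro k _; ring
    have h1 : ∑ k ∈ Finset.Icc 1 τ, ((c k : ℝ) - (c' k : ℝ)) * β ^ ((τ - k : ℕ)) = 0 := by
      have : ∀ k ∈ Finset.Icc 1 τ, ((c k : ℝ) - (c' k : ℝ)) * β ^ ((τ - k : ℕ))
          = (((c k : ℝ) - (c' k : ℝ)) * β ^ (-(k:ℤ))) * β ^ τ := by
        intro k hk
        rw [Finset.mem_Icc] at hk
        rw [mul_assoc, ← zpow_natCast β τ, ← zpow_add₀ hβne, ← zpow_natCast β (τ - k)]
        congr 2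
        omega
      rw [Finset.sum_congr rfl this, ← Finset.sum_mul, h0, zero_mul]
    rw [← h1]
    apply Finset.sum_nbij' (fun i => τ - i) (fun k => τ - k)
    · intro i hi; simp only [Finset.mem_range] at hi; simp only [Finset.mem_Icc]; omega
    · intro k hk; simp only [Finset.mem_Icc] at hk; simp only [Finset.mem_range]; omega
    · intro i hi; simp only [Finset.mem_range] at hi; omega
    · intro k hk; simp only [Finset.mem_Icc] at hk; omega
    · intro i hi
      simp only [Finset.mem_range] at hi
      simp only [he_def]
      have : τ - (τ - i) = i := by omega
      rw [this]
      push_cast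
      ring
  intro k hk
  rw [Finset.mem_Icc] at hk
  have := zero_of_small_digits N β hβ0 hβ1 τ e he hsum (τ - k) (by omega)
  simp only [he_def] at this
  have h2 : τ - (τ - k) = k := by omega
  rw [h2] at this
  omega


/-- window of z of length τ starting at a -/
def win (z : List ℕ) (τ a : ℕ) : List ℕ := (z.drop a).take τ

lemma win_length (z : List ℕ) (τ a : ℕ) (h : a + τ ≤ z.length) : (win z τ a).length = τ := by
  simp [win]; omega

lemma getD_le {N n : ℕ} {w : List ℕ} (hw : w ∈ Words N n) (i : ℕ) : w.getD i 0 ≤ N := by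
  rcases lt_or_ge i w.length with h | h
  · rw [List.getD_eq_getElem w 0 h]; exact hw.2 _ (List.getElem_mem h)
  · rw [List.getD_eq_default w 0 h]; exact Nat.zero_le N

lemma win_mem_words {N ℓ : ℕ} {z : List ℕ} (hz : z ∈ Words N ℓ) (τ a : ℕ)
    (h : a + τ ≤ ℓ) : win z τ a ∈ Words N τ := by
  refine ⟨win_length z τ a (by rw [hz.1]; exact h), ?_⟩
  intro x hx
  exact hz.2 x (List.mem_of_mem_drop (List.mem_of_mem_take hx))

lemma win_getElem (z : List ℕ) (τ a k : ℕ) (h : a + τ ≤ z.length) (hk : k < τ) :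
    (win z τ a)[k]'(by rw [win_length z τ a h]; exact hk) = z[a + k]'(by omega) := by
  simp [win, List.getElem_take, List.getElem_drop]

lemma win_drop_one (z : List ℕ) (τ a : ℕ) (h : a + 1 + τ ≤ z.length) :
    (win z τ a).drop 1 = (win z τ (a + 1)).dropLast := by
  apply List.ext_getElem
  · rw [List.length_drop, List.length_dropLast, win_length z τ a (by omega),
      win_length z τ (a+1) (by omega)]
  · intro k h1 h2
    rw [List.length_drop, win_length z τ a (by omega)] at h1
    rw [List.getElem_drop, List.getElem_dropLast]
    rw [win_getElem z τ a (1 + k) (by omega) (by omega),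
      win_getElem z τ (a+1) k (by omega) (by omega)]
    congr 1
    omega

lemma win_decomp (z : List ℕ) (τ a : ℕ) (h : a + τ ≤ z.length) :
    z = z.take a ++ win z τ a ++ z.drop (a + τ) := by
  rw [List.append_assoc]
  conv_lhs => rw [← List.take_append_drop a z]
  congr 1
  rw [win]
  conv_lhs => rw [← List.take_append_drop τ (z.drop a)]
  rw [List.drop_drop]

lemma path_getD (τ : ℕ) (q : ℕ → List ℕ) (hlen : ∀ i, (q i).length = τ)
    (hov : ∀ i, (q i).drop 1 = (q (i + 1)).dropLast) :
    ∀ j, j < τ → ∀ i, (q i).getD j 0 = (q (i + j)).getD 0 0 := by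
  intro j
  induction j with
  | zero => intro _ i; rw [Nat.add_zero]
  | succ j ih =>
    intro hj i
    have h2 : j < (q (i+1)).length := by rw [hlen]; omega
    have e1 : (q i).getD (j+1) 0 = ((q i).drop 1).getD j 0 := by
      rw [List.getD_eq_getElem?_getD, List.getD_eq_getElem?_getD, List.getElem?_drop,
        Nat.add_comm]
    have e3 : ((q (i+1)).dropLast).getD j 0 = (q (i+1)).getD j 0 := by
      have hj2 : j < (q (i+1)).dropLast.length := by
        rw [List.length_dropLast, hlen]; omega
      rw [List.getD_eq_getElem _ 0 hj2, List.getD_eq_getElem _ 0 h2, List.getElem_dropLast]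
    have : i + 1 + j = i + (j + 1) := by omega
    rw [e1, hov i, e3, ih (by omega) (i+1), this]

lemma path_win (τ ℓ : ℕ) (q : ℕ → List ℕ) (hlen : ∀ i, (q i).length = τ)
    (hov : ∀ i, (q i).drop 1 = (q (i + 1)).dropLast) (a : ℕ) (ha : a + τ ≤ ℓ) :
    win (List.ofFn (fun k : Fin ℓ => (q (k : ℕ)).getD 0 0)) τ a = q a := by
  have hzlen : (List.ofFn (fun k : Fin ℓ => (q (k : ℕ)).getD 0 0)).length = ℓ := by
    rw [List.length_ofFn]
  apply List.ext_getElem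
  · rw [win_length _ τ a (by omega), hlen]
  · intro k h1 h2
    rw [win_length _ τ a (by omega)] at h1
    rw [win_getElem _ τ a k (by omega) h1]
    have e1 : (List.ofFn (fun k : Fin ℓ => (q (k : ℕ)).getD 0 0))[a+k]'(by omega)
        = (q (a + k)).getD 0 0 := by
      simp [List.getElem_ofFn]
    rw [e1, ← path_getD τ q hlen hov k h1 a, List.getD_eq_getElem _ 0 h2]


lemma Wset_subset_words (N : ℕ) {m : ℕ} (τ : ℕ) (d : Fin (m + 1) → ℕ → ℕ)
    (hdN : True) : Wset N τ d ⊆ Words N τ := by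
  rintro v (⟨w, hw, j, rfl⟩ | ⟨w, hw, j, rfl⟩)
  · refine ⟨List.length_ofFn, ?_⟩
    intro x hx
    rw [List.mem_ofFn] at hx
    obtain ⟨idx, rfl⟩ := hx
    have hk1 : 1 ≤ τ - (idx : ℕ) := by omega
    have hk2 : τ - (idx : ℕ) ≤ τ := by omega
    have h1 := hw.2 (τ - (idx : ℕ)) hk1 hk2
    have h2 : τ - (τ - (idx : ℕ)) = (idx : ℕ) := by omega
    rw [h2] at h1
    have h3 : d j (τ - (idx : ℕ)) ≤ digitSup d (τ - (idx : ℕ)) := by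
      exact Finset.le_sup (f := fun j => d j (τ - (idx : ℕ))) (Finset.mem_univ j)
    exact Nat.le_trans (Nat.add_le_add_left h3 _) h1
  · refine ⟨List.length_ofFn, ?_⟩
    intro x hx
    rw [List.mem_ofFn] at hx
    obtain ⟨idx, rfl⟩ := hx
    exact Nat.le_trans (Nat.sub_le _ _) (getD_le hw.1 (idx : ℕ))

lemma Wset_congr (N : ℕ) {m : ℕ} (τ : ℕ) (d d' : Fin (m + 1) → ℕ → ℕ)
    (h : ∀ j, ∀ k ∈ Finset.Icc 1 τ, d j k = d' j k) : Wset N τ d = Wset N τ d' := by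
  have hsup : ∀ k, 1 ≤ k → k ≤ τ → digitSup d k = digitSup d' k := by
    intro k h1 h2
    unfold digitSup
    apply Finset.sup_congr rfl
    intro j _
    exact h j k (Finset.mem_Icc.mpr ⟨h1, h2⟩)
  have hOm : Omega N τ (digitSup d) τ = Omega N τ (digitSup d') τ := by
    ext w
    unfold Omega
    constructor <;> rintro ⟨hw1, hw2⟩ <;> refine ⟨hw1, fun k hk1 hk2 => ?_⟩
    · rw [← hsup k hk1 hk2]; exact hw2 k hk1 hk2
    · rw [hsup k hk1 hk2]; exact hw2 k hk1 hk2
  have hOmh : OmegaHat N τ (digitSup d) τ = OmegaHat N τ (digitSup d') τ := by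
    ext w
    unfold OmegaHat
    constructor <;> rintro ⟨hw1, hw2⟩ <;> refine ⟨hw1, fun k hk1 hk2 => ?_⟩
    · rw [← hsup k hk1 hk2]; exact hw2 k hk1 hk2
    · rw [hsup k hk1 hk2]; exact hw2 k hk1 hk2
  have hdig : ∀ (j : Fin (m+1)) (idx : Fin τ), d j (τ - (idx:ℕ)) = d' j (τ - (idx:ℕ)) := by
    intro j idx
    exact h j _ (Finset.mem_Icc.mpr ⟨by omega, by omega⟩)
  unfold Wset
  rw [hOm, hOmh]
  congr 1 <;> ext v <;> constructor <;> rintro ⟨w, hw, j, rfl⟩ <;>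
    exact ⟨w, hw, j, by simp only [hdig]⟩


lemma hasCycle_not_adm (N : ℕ) {m : ℕ} (τ : ℕ) (d : Fin (m + 1) → ℕ → ℕ)
    (hcyc : HasCycle (Vset N τ d)) : ¬ AdmissibleWith N τ d := by
  obtain ⟨L, p, hL, hpV, hpov, hp0⟩ := hcyc
  set q : ℕ → List ℕ := fun i => p (i % L) with hq
  have hqV : ∀ i, q i ∈ Vset N τ d := fun i => hpV _ (le_of_lt (Nat.mod_lt i hL))
  have hqlen : ∀ i, (q i).length = τ := fun i => (hqV i).1.1
  have hqov : ∀ i, (q i).drop 1 = (q (i + 1)).dropLast := by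
    intro i
    have hr : i % L < L := Nat.mod_lt i hL
    have hmod : (i + 1) % L = (i % L + 1) % L := by
      conv_lhs => rw [Nat.add_mod]
      rw [Nat.add_mod (i % L) 1 L, Nat.mod_mod_of_dvd _ dvd_rfl]
    rcases eq_or_lt_of_le (Nat.succ_le_of_lt hr) with he | hlt
    · show (p (i % L)).drop 1 = (p ((i + 1) % L)).dropLast
      have he' : i % L + 1 = L := by omega
      have h2 : (i + 1) % L = 0 := by rw [hmod, he', Nat.mod_self]
      have h5 := hpov (i % L) hr
      rw [he'] at h5
      rw [h2, hp0]
      exact h5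
    · show (p (i % L)).drop 1 = (p ((i + 1) % L)).dropLast
      rw [hmod, Nat.mod_eq_of_lt hlt]
      exact hpov _ hr
  rintro ⟨ℓ, hℓτ, heq⟩
  have hz : List.ofFn (fun k : Fin ℓ => (q (k : ℕ)).getD 0 0) ∈ Words N ℓ := by
    refine ⟨List.length_ofFn, ?_⟩
    intro x hx
    rw [List.mem_ofFn] at hx
    obtain ⟨k, rfl⟩ := hx
    exact getD_le (hqV (k : ℕ)).1 0
  rw [← heq] at hz
  simp only [Set.mem_iUnion, Set.mem_setOf_eq] at hz
  obtain ⟨n, hn, u, hu, w, hwW, v, hv, hzd⟩ := hz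
  rw [Finset.mem_Icc] at hn
  have hwlen : w.length = τ := (Wset_subset_words N τ d trivial hwW).1
  have hwin : win (List.ofFn (fun k : Fin ℓ => (q (k : ℕ)).getD 0 0)) τ (n - τ) = w := by
    rw [hzd, win, List.append_assoc]
    have : u.length = n - τ := hu.1
    rw [← this, List.drop_left, ← hwlen, List.take_left]
  rw [path_win τ ℓ q hqlen hqov (n - τ) (by omega)] at hwin
  exact (hqV (n - τ)).2 (hwin ▸ hwW)

lemma not_hasCycle_adm (N : ℕ) {m : ℕ} (τ : ℕ) (d : Fin (m + 1) → ℕ → ℕ)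
    (hcyc : ¬ HasCycle (Vset N τ d)) : AdmissibleWith N τ d := by
  set ℓ := τ + (N + 1) ^ τ with hℓ
  refine ⟨ℓ, by omega, ?_⟩
  have key : ∀ z ∈ Words N ℓ, ∃ a, a + τ ≤ ℓ ∧ win z τ a ∈ Wset N τ d := by
    intro z hz
    by_contra hno
    push_neg at hno
    have hV : ∀ a, a + τ ≤ ℓ → win z τ a ∈ Vset N τ d := by
      intro a ha
      exact ⟨win_mem_words hz τ a ha, hno a ha⟩
    have hzlen : z.length = ℓ := hz.1
    set g : Fin ((N + 1) ^ τ + 1) → (Fin τ → Fin (N + 1)) :=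
      fun a k => ⟨min ((win z τ (a : ℕ)).getD (k : ℕ) 0) N,
        Nat.lt_succ_of_le (min_le_right _ _)⟩ with hg
    have hcard : Fintype.card (Fin τ → Fin (N + 1)) < Fintype.card (Fin ((N + 1) ^ τ + 1)) := by
      simp [Fintype.card_fun]
    obtain ⟨a, b, hab, hgab⟩ := Fintype.exists_ne_map_eq_of_card_lt g hcard
    wlog hlt : (a : ℕ) < (b : ℕ) generalizing a b
    · have hne : (a : ℕ) ≠ (b : ℕ) := fun h => hab (Fin.ext h)
      exact this b a hab.symm hgab.symm (by omega)
    have hale : (a : ℕ) + τ ≤ ℓ := by have := a.isLt; omega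
    have hble : (b : ℕ) + τ ≤ ℓ := by have := b.isLt; omega
    have hWa : win z τ (a : ℕ) ∈ Words N τ := win_mem_words hz τ _ hale
    have hWb : win z τ (b : ℕ) ∈ Words N τ := win_mem_words hz τ _ hble
    have hwineq : win z τ (a : ℕ) = win z τ (b : ℕ) := by
      apply List.ext_getElem
      · rw [hWa.1, hWb.1]
      · intro k h1 h2
        have hk : k < τ := by rw [hWa.1] at h1; exact h1
        have hval := congr_arg Fin.val (congr_fun hgab ⟨k, hk⟩)
        simp only [hg] at hval
        rw [min_eq_left (getD_le hWa k), min_eq_left (getD_le hWb k),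
          List.getD_eq_getElem _ 0 h1, List.getD_eq_getElem _ 0 h2] at hval
        exact hval
    apply hcyc
    refine ⟨(b : ℕ) - (a : ℕ), fun i => win z τ ((a : ℕ) + i), by omega, ?_, ?_, ?_⟩
    · intro i hi
      exact hV _ (by omega)
    · intro i hi
      have h3 := win_drop_one z τ ((a : ℕ) + i) (by omega)
      show List.drop 1 (win z τ ((a : ℕ) + i)) = (win z τ ((a : ℕ) + (i + 1))).dropLast
      rw [← Nat.add_assoc]
      exact h3
    · show win z τ ((a : ℕ) + 0) = win z τ ((a : ℕ) + ((b : ℕ) - (a : ℕ)))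
      have h4 : (a : ℕ) + ((b : ℕ) - (a : ℕ)) = (b : ℕ) := by omega
      rw [Nat.add_zero, h4, hwineq]
  apply Set.Subset.antisymm
  · intro z hz
    simp only [Set.mem_iUnion, Set.mem_setOf_eq] at hz
    obtain ⟨n, hn, u, hu, w, hwW, v, hv, rfl⟩ := hz
    rw [Finset.mem_Icc] at hn
    have hw' := Wset_subset_words N τ d trivial hwW
    constructor
    · rw [List.length_append, List.length_append, hu.1, hv.1, hw'.1]
      omega
    · intro x hx
      simp only [List.mem_append] at hx
      rcases hx with (hx | hx) | hx
      exacts [hu.2 x hx, hw'.2 x hx, hv.2 x hx]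
  · intro z hz
    obtain ⟨a, ha, hwin⟩ := key z hz
    simp only [Set.mem_iUnion, Set.mem_setOf_eq]
    refine ⟨a + τ, Finset.mem_Icc.mpr ⟨by omega, by omega⟩, z.take a, ⟨?_, ?_⟩,
      win z τ a, hwin, z.drop (a + τ), ⟨?_, ?_⟩, ?_⟩
    · rw [List.length_take, hz.1]; omega
    · intro x hx; exact hz.2 x (List.mem_of_mem_take hx)
    · rw [List.length_drop, hz.1]
    · intro x hx; exact hz.2 x (List.mem_of_mem_drop hx)
    · exact win_decomp z τ a (by rw [hz.1]; omega)

end Aux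

/-- Let `t = (t_0,…,t_m) ∈ T^{m+1}` with `0 = t_0 < ⋯ < t_m` (with minimal digit
representation `d` of length `τ = τ_t`). Then `t` is an admissible translation vector
iff the directed graph `G_t` has no cycle. -/
theorem stmt1 (N : ℕ) (hN : 0 < N) (β : ℝ) (hβ0 : 0 < β) (hβ1 : β < 1 / (N + 1))
    (m : ℕ) (t : Fin (m + 1) → ℝ) (ht0 : t 0 = 0) (hmono : StrictMono t)
    (hT : ∀ j, t j ∈ Tset N β) (τ : ℕ) (d : Fin (m + 1) → ℕ → ℕ)
    (hd : IsMinimalRep N β t τ d) :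
    IsAdmissible N β t ↔ ¬ HasCycle (Vset N τ d) := by
  have hN1 : (0:ℝ) < (N:ℝ) + 1 := by positivity
  have hβ1' : β * (N + 1) < 1 := by
    calc β * ((N:ℝ) + 1) < (1 / ((N:ℝ) + 1)) * ((N:ℝ) + 1) :=
          mul_lt_mul_of_pos_right hβ1 hN1
      _ = 1 := by field_simp
  have hβlt1 : β < 1 := by nlinarith [Nat.cast_nonneg (α := ℝ) N]
  have hNpos : (0:ℝ) < (N:ℝ) := by exact_mod_cast hN
  have hcoef : (1 - β) / (N:ℝ) ≠ 0 :=
    div_ne_zero (by linarith) (ne_of_gt hNpos)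
  constructor
  · rintro ⟨-, τ', d', hmin', hadm⟩
    have hττ' : τ = τ' := by
      by_contra hne
      rcases Nat.lt_or_ge τ' τ with h | h
      · exact hd.2 τ' h d' hmin'.1
      · exact hmin'.2 τ (by omega) d hd.1
    subst hττ'

    have hdd : ∀ j, ∀ k ∈ Finset.Icc 1 τ, d j k = d' j k := by
      intro j
      apply digits_unique N β hβ0 hβ1' τ (d j) (d' j) (hd.1.1 j) (hmin'.1.1 j)
      have h1 := hd.1.2 j
      have h2 := hmin'.1.2 j
      exact mul_left_cancel₀ hcoef (h1.symm.trans h2)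
    have hW : Wset N τ d = Wset N τ d' := Wset_congr N τ d d' hdd
    intro hcy
    refine hasCycle_not_adm N τ d' ?_ hadm
    unfold Vset at *
    rw [← hW]
    exact hcy
  · intro hnc
    exact ⟨hT, τ, d, hd, not_hasCycle_adm N τ d hnc⟩

end HSCantor
end
end

section
/- Suppose 0 < β < 1/(2N+1). Then each x ∈ Γ_{β,{0,1,…,N}} ⊂ Γ_{β,{−N,…,−1,0,1,…,2N}} has a unique {−N,…,−1,0,1,…,2N}-coding, and this coding coincides with its {0,1,…,N}-coding. -/
noncomputable section

namespace HSCantor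

lemma summable_aux (N : ℕ) (β : ℝ) (hβ0 : 0 < β) (hβ1 : β < 1)
    (d : ℕ → ℤ) (hd : ∀ k, |d k| ≤ 2 * N) :
    Summable (fun k : ℕ => (d k : ℝ) * β ^ k) := by
  apply Summable.of_norm_bounded (g := fun k : ℕ => (2 * N : ℝ) * β ^ k)
  · exact (summable_geometric_of_lt_one hβ0.le hβ1).mul_left _
  · intro k
    rw [norm_mul, norm_pow, Real.norm_eq_abs, Real.norm_eq_abs, abs_of_pos hβ0]
    apply mul_le_mul_of_nonneg_right _ (pow_nonneg hβ0.le k)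
    calc |(d k : ℝ)| = ((|d k| : ℤ) : ℝ) := by push_cast; ring
    _ ≤ ((2 * N : ℤ) : ℝ) := by exact_mod_cast hd k
    _ = (2 * N : ℝ) := by push_cast; ring

lemma key0 (N : ℕ) (β : ℝ) (hβ0 : 0 < β) (hβ1 : β * (2 * N + 1) < 1)
    (d : ℕ → ℤ) (hd : ∀ k, |d k| ≤ 2 * N)
    (h : ∑' k : ℕ, (d k : ℝ) * β ^ k = 0) : d 0 = 0 := by
  have hβlt1 : β < 1 := by nlinarith [Nat.cast_nonneg (α := ℝ) N]
  have hs := summable_aux N β hβ0 hβlt1 d hd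
  have hsplit := (Summable.tsum_eq_zero_add hs).symm.trans h
  simp only [pow_zero, mul_one] at hsplit
  have hd0 : (d 0 : ℝ) = -∑' k : ℕ, (d (k + 1) : ℝ) * β ^ (k + 1) := by
    linarith
  have hgsum : HasSum (fun k : ℕ => (2 * N : ℝ) * β ^ (k + 1))
      (2 * N * β * (1 - β)⁻¹) := by
    have hg := (hasSum_geometric_of_lt_one hβ0.le hβlt1).mul_left (2 * N * β)
    have hfun : (fun k : ℕ => (2 * N : ℝ) * β ^ (k + 1))
        = fun k : ℕ => 2 * N * β * β ^ k := funext fun k => by ring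
    rw [hfun]; exact hg
  have hb : ‖∑' k : ℕ, (d (k + 1) : ℝ) * β ^ (k + 1)‖ ≤ 2 * N * β * (1 - β)⁻¹ := by
    refine tsum_of_norm_bounded hgsum fun k => ?_
    rw [norm_mul, norm_pow, Real.norm_eq_abs, Real.norm_eq_abs, abs_of_pos hβ0]
    apply mul_le_mul_of_nonneg_right _ (pow_nonneg hβ0.le _)
    rw [← Int.cast_abs]
    exact_mod_cast hd (k + 1)
  have hlt : |(d 0 : ℝ)| < 1 := by
    rw [hd0, abs_neg, ← Real.norm_eq_abs]
    refine lt_of_le_of_lt hb ?_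
    have h1β : 0 < 1 - β := by linarith
    rw [mul_inv_lt_iff₀' h1β]
    nlinarith [Nat.cast_nonneg (α := ℝ) N]
  have : ((|d 0| : ℤ) : ℝ) < 1 := by rw [Int.cast_abs]; exact hlt
  have : |d 0| < 1 := by exact_mod_cast this
  have := abs_lt.mp this
  omega

lemma key (N : ℕ) (β : ℝ) (hβ0 : 0 < β) (hβ1 : β * (2 * N + 1) < 1)
    (d : ℕ → ℤ) (hd : ∀ k, |d k| ≤ 2 * N)
    (h : ∑' k : ℕ, (d k : ℝ) * β ^ k = 0) : ∀ n, d n = 0 := by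
  have hβlt1 : β < 1 := by nlinarith [Nat.cast_nonneg (α := ℝ) N]
  intro n
  induction n generalizing d with
  | zero => exact key0 N β hβ0 hβ1 d hd h
  | succ n ih =>
    have h0 : d 0 = 0 := key0 N β hβ0 hβ1 d hd h
    have hs := summable_aux N β hβ0 hβlt1 d hd
    have hsplit := (Summable.tsum_eq_zero_add hs).symm.trans h
    simp only [h0, Int.cast_zero, zero_mul, zero_add, pow_zero, mul_one] at hsplit
    have htail : ∑' k : ℕ, (d (k + 1) : ℝ) * β ^ k = 0 := by
      have : β * ∑' k : ℕ, (d (k + 1) : ℝ) * β ^ k = 0 := by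
        rw [← tsum_mul_left, ← hsplit]; congr 1; funext k; ring
      rcases mul_eq_zero.1 this with h' | h'
      · exact absurd h' hβ0.ne'
      · exact h'
    exact ih (fun k => d (k + 1)) (fun k => hd (k + 1)) htail

/-- Suppose `0 < β < 1/(2N+1)`. Each `x ∈ Γ_{β,{0,…,N}}` has a unique
`{-N,…,-1,0,1,…,2N}`-coding, and it coincides with its `{0,…,N}`-coding. -/
theorem stmt6 (N : ℕ) (hN : 0 < N) (β : ℝ) (hβ0 : 0 < β) (hβ1 : β < 1 / (2 * N + 1))
    (x : ℝ) (hx : x ∈ Gamma N β) (c c' : ℕ → ℤ)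
    (hc : IsCoding N β (Set.Icc (-(N : ℤ)) (2 * N)) x c)
    (hc' : IsCoding N β (Set.Icc 0 (N : ℤ)) x c') :
    c = c' := by
  have hN' : (0 : ℝ) < 2 * N + 1 := by positivity
  have hβ1' : β * (2 * N + 1) < 1 := by
    rw [lt_div_iff₀ hN'] at hβ1; linarith
  have hβlt1 : β < 1 := by nlinarith [Nat.cast_nonneg (α := ℝ) N]
  have hcb : ∀ k, |c k| ≤ 2 * N := by
    intro k
    obtain ⟨h1, h2⟩ := hc.1 k
    rw [abs_le]; constructor <;> omega
  have hcb' : ∀ k, |c' k| ≤ 2 * N := by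
    intro k
    obtain ⟨h1, h2⟩ := hc'.1 k
    rw [abs_le]; constructor <;> omega
  have hs := summable_aux N β hβ0 hβlt1 c hcb
  have hs' := summable_aux N β hβ0 hβlt1 c' hcb'
  have hfac : (1 - β) / N ≠ 0 := by
    apply div_ne_zero (by linarith)
    exact_mod_cast hN.ne'
  have heq : ∑' k : ℕ, (c k : ℝ) * β ^ k = ∑' k : ℕ, (c' k : ℝ) * β ^ k := by
    have := hc.2.symm.trans hc'.2
    exact mul_left_cancel₀ hfac this
  have hdsum : ∑' k : ℕ, ((c k - c' k : ℤ) : ℝ) * β ^ k = 0 := by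
    have : (fun k : ℕ => ((c k - c' k : ℤ) : ℝ) * β ^ k)
        = fun k => (c k : ℝ) * β ^ k - (c' k : ℝ) * β ^ k := by
      funext k; push_cast; ring
    rw [this, Summable.tsum_sub hs hs', heq, sub_self]
  have hdb : ∀ k, |c k - c' k| ≤ 2 * N := by
    intro k
    obtain ⟨h1, h2⟩ := hc.1 k
    obtain ⟨h3, h4⟩ := hc'.1 k
    rw [abs_le]; constructor <;> omega
  have := key N β hβ0 hβ1' (fun k => c k - c' k) hdb hdsum
  funext k
  have h5 : c k - c' k = 0 := this k
  omega

end HSCantor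
end
end

section
/- Suppose 0 < β < 1/(2N+1). If x ∈ ℝ satisfies x, 2x, …, Nx ∈ Γ, then x ∈ Γ_{β,{0,1}}. -/
noncomputable section

namespace HSCantor

lemma summable_code (β : ℝ) (hβ0 : 0 ≤ β) (hβ1 : β < 1) (c : ℕ → ℤ) (C : ℝ)
    (hc : ∀ k, |(c k : ℝ)| ≤ C) : Summable (fun k => (c k : ℝ) * β ^ k) := by
  apply Summable.of_norm_bounded
    ((summable_geometric_of_lt_one hβ0 hβ1).mul_left C)
  intro k
  rw [norm_mul, norm_pow, Real.norm_eq_abs, Real.norm_eq_abs, abs_of_nonneg hβ0]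
  exact mul_le_mul_of_nonneg_right (hc k) (pow_nonneg hβ0 k)

set_option maxHeartbeats 1000000 in
lemma zero_code (N : ℕ) (hN : 0 < N) (β : ℝ) (hβ0 : 0 < β) (hβ1 : β < 1 / (2 * N + 1))
    (e : ℕ → ℤ) (he : ∀ k, |e k| ≤ 2 * N)
    (hsum : ∑' k, (e k : ℝ) * β ^ k = 0) : ∀ k, e k = 0 := by
  have hN1 : (1 : ℝ) ≤ N := by exact_mod_cast hN
  have hβ1' : β < 1 := lt_of_lt_of_le hβ1 (by rw [div_le_one (by linarith)]; linarith)
  have h2 : β * (2 * N + 1) < 1 := (lt_div_iff₀ (by linarith)).1 hβ1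
  have heC : ∀ k, |(e k : ℝ)| ≤ 2 * N := by
    intro k
    have := he k
    rw [← Int.cast_abs]
    exact_mod_cast by exact_mod_cast this
  have hs : Summable (fun k => (e k : ℝ) * β ^ k) :=
    summable_code β hβ0.le hβ1' e (2 * N) heC
  intro n
  induction n using Nat.strong_induction_on with
  | _ n ih =>
    have hz : ∀ k ∈ Finset.range n, (e k : ℝ) * β ^ k = 0 := by
      intro k hk
      rw [ih k (Finset.mem_range.1 hk)]; simp
    have hsplit := Summable.sum_add_tsum_nat_add n hs
    rw [hsum, Finset.sum_eq_zero hz, zero_add] at hsplit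
    have hsn : Summable (fun k => (e (k + n) : ℝ) * β ^ (k + n)) :=
      (summable_nat_add_iff n).2 hs
    have hfirst := Summable.tsum_eq_zero_add hsn
    rw [hsplit] at hfirst
    have hkey : (e n : ℝ) * β ^ n = -∑' k, (e (k + 1 + n) : ℝ) * β ^ (k + 1 + n) := by
      simp only [zero_add] at hfirst
      linarith [hfirst]
    have hsum2 : Summable (fun k => (e (k + 1 + n) : ℝ) * β ^ (k + 1 + n)) :=
      (summable_nat_add_iff 1).2 hsn
    have hbound : ‖∑' k, (e (k + 1 + n) : ℝ) * β ^ (k + 1 + n)‖ ≤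
        2 * N * β ^ (n + 1) * (1 - β)⁻¹ := by
      calc ‖∑' k, (e (k + 1 + n) : ℝ) * β ^ (k + 1 + n)‖
          ≤ ∑' k, ‖(e (k + 1 + n) : ℝ) * β ^ (k + 1 + n)‖ :=
            norm_tsum_le_tsum_norm hsum2.norm
        _ ≤ ∑' k : ℕ, (2 * N * β ^ (n + 1)) * β ^ k := by
            apply Summable.tsum_le_tsum _ hsum2.norm
              ((summable_geometric_of_lt_one hβ0.le hβ1').mul_left _)
            intro k
            rw [norm_mul, norm_pow, Real.norm_eq_abs, Real.norm_eq_abs,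
              abs_of_nonneg hβ0.le]
            have : β ^ (k + 1 + n) = β ^ (n + 1) * β ^ k := by ring
            rw [this, ← mul_assoc]
            apply mul_le_mul_of_nonneg_right _ (pow_nonneg hβ0.le k)
            have h1 := heC (k + 1 + n)
            have h2 : (0:ℝ) < β ^ (n+1) := pow_pos hβ0 _
            nlinarith [pow_nonneg hβ0.le (n+1)]
        _ = 2 * N * β ^ (n + 1) * (1 - β)⁻¹ := by
            rw [tsum_mul_left, tsum_geometric_of_lt_one hβ0.le hβ1']
    have hβn : (0:ℝ) < β ^ n := pow_pos hβ0 n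
    have habs : |(e n : ℝ)| * β ^ n < β ^ n := by
      have h3 : |(e n : ℝ)| * β ^ n ≤ 2 * N * β ^ (n + 1) * (1 - β)⁻¹ := by
        rw [← abs_of_nonneg hβn.le, ← abs_mul]
        calc |(e n : ℝ) * β ^ n| = ‖(e n : ℝ) * β ^ n‖ := rfl
          _ = ‖-∑' k, (e (k + 1 + n) : ℝ) * β ^ (k + 1 + n)‖ := by rw [hkey]
          _ = ‖∑' k, (e (k + 1 + n) : ℝ) * β ^ (k + 1 + n)‖ := norm_neg _
          _ ≤ _ := hbound
      have h4 : 2 * N * β ^ (n + 1) * (1 - β)⁻¹ < β ^ n := by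
        have h5 : (0:ℝ) < 1 - β := by linarith
        have h6 : (2 * (N:ℝ) * β) * (1 - β)⁻¹ < 1 := by
          rw [← div_eq_mul_inv, div_lt_one h5]; linarith
        have h7 : 2 * (N:ℝ) * β ^ (n + 1) * (1 - β)⁻¹
            = β ^ n * ((2 * (N:ℝ) * β) * (1 - β)⁻¹) := by ring
        rw [h7]
        nlinarith [hβn]
      linarith
    have h8 : |(e n : ℝ)| < 1 := by
      by_contra hcon
      push_neg at hcon
      nlinarith
    have h9 : |e n| < 1 := by
      rw [← Int.cast_abs] at h8
      exact_mod_cast h8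
    rw [abs_lt] at h9
    omega

set_option maxHeartbeats 1000000 in
/-- Suppose `0 < β < 1/(2N+1)`. If `x, 2x, …, Nx ∈ Γ`, then `x ∈ Γ_{β,{0,1}}`. -/
theorem stmt8 (N : ℕ) (hN : 0 < N) (β : ℝ) (hβ0 : 0 < β) (hβ1 : β < 1 / (2 * N + 1))
    (x : ℝ) (h : ∀ i : ℕ, 1 ≤ i → i ≤ N → (i : ℝ) * x ∈ Gamma N β) :
    x ∈ cantorD N β ({0, 1} : Set ℤ) := by
  have hN1 : (1 : ℝ) ≤ N := by exact_mod_cast hN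
  have hβ1' : β < 1 := lt_of_lt_of_le hβ1 (by rw [div_le_one (by linarith)]; linarith)
  have hNne : ((1 : ℝ) - β) / N ≠ 0 := by
    apply div_ne_zero (by linarith) (by linarith)
  obtain ⟨a, ha1, ha2⟩ := h 1 le_rfl hN
  rw [Nat.cast_one, one_mul] at ha2
  have haN : ∀ k, 0 ≤ a k ∧ a k ≤ N := fun k => ha1 k
  have hsa : Summable (fun k => (a k : ℝ) * β ^ k) := by
    apply summable_code β hβ0.le hβ1' a N
    intro k
    rw [abs_le]
    have h1 : (0:ℝ) ≤ (a k : ℝ) := by exact_mod_cast (haN k).1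
    have h2 : (a k : ℝ) ≤ N := by exact_mod_cast (haN k).2
    constructor <;> linarith
  have key : ∀ i : ℕ, 1 ≤ i → i ≤ N → ∀ k, (i : ℤ) * a k ≤ N := by
    intro i hi1
    induction i, hi1 using Nat.le_induction with
    | base =>
      intro _ k
      simpa using (haN k).2
    | succ i hi ih =>
      intro hiN k
      have hiN' : i ≤ N := le_trans (Nat.le_succ i) hiN
      have ih' := ih hiN'
      obtain ⟨b, hb1, hb2⟩ := h (i + 1) (by omega) hiN
      have hbN : ∀ k, 0 ≤ b k ∧ b k ≤ N := fun k => hb1 k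
      set A : ℕ → ℤ := fun k => ((i + 1 : ℕ) : ℤ) * a k with hA
      have hAk : ∀ k, 0 ≤ A k ∧ A k ≤ 2 * N := by
        intro k
        have hsplitm : A k = (i : ℤ) * a k + a k := by
          simp only [hA]; push_cast; ring
        constructor
        · rw [hsplitm]
          have := mul_nonneg (Int.natCast_nonneg i) (haN k).1
          linarith [(haN k).1]
        · rw [hsplitm]; linarith [ih' k, (haN k).2]
      have heq : (1 - β) / N * ∑' k, (b k : ℝ) * β ^ k
          = (1 - β) / N * ∑' k, (A k : ℝ) * β ^ k := by
        rw [← hb2, ha2]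
        have h9 : ∑' k, (A k : ℝ) * β ^ k
            = ((i + 1 : ℕ) : ℝ) * ∑' k, (a k : ℝ) * β ^ k := by
          rw [← tsum_mul_left]
          congr 1; funext k; simp only [hA]; push_cast; ring
        rw [h9]; ring
      have heq2 : ∑' k, (b k : ℝ) * β ^ k = ∑' k, (A k : ℝ) * β ^ k :=
        mul_left_cancel₀ hNne heq
      have hsb : Summable (fun k => (b k : ℝ) * β ^ k) := by
        apply summable_code β hβ0.le hβ1' b N
        intro k
        rw [abs_le]
        refine ⟨?_, by exact_mod_cast (hbN k).2⟩
        have : (0:ℝ) ≤ (b k : ℝ) := by exact_mod_cast (hbN k).1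
        linarith
      have hsc : Summable (fun k => (A k : ℝ) * β ^ k) := by
        apply summable_code β hβ0.le hβ1' A (2 * N)
        intro k
        rw [abs_le]
        have h1 : (0:ℝ) ≤ (A k : ℝ) := by exact_mod_cast (hAk k).1
        have h2 : (A k : ℝ) ≤ 2 * N := by exact_mod_cast (hAk k).2
        constructor <;> linarith
      have hzero : ∀ k, b k - A k = 0 := by
        apply zero_code N hN β hβ0 hβ1
        · intro k
          have h1 := (hbN k).1
          have h2 := (hbN k).2
          have h3 := (hAk k).1
          have h4 := (hAk k).2
          rw [abs_le]; omega
        · have hfun : (fun k => ((b k - A k : ℤ) : ℝ) * β ^ k)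
              = fun k => (b k : ℝ) * β ^ k - (A k : ℝ) * β ^ k := by
            funext k; push_cast; ring
          rw [hfun, Summable.tsum_sub hsb hsc, heq2, sub_self]
      have hz := hzero k
      have hble := (hbN k).2
      have : A k = ((i + 1 : ℕ) : ℤ) * a k := rfl
      omega
  refine ⟨a, ?_, ha2⟩
  intro k
  have h1 := key N hN le_rfl k
  have h2 := (haN k).1
  have h3 : a k ≤ 1 := by nlinarith [Int.natCast_pos.2 hN]
  simp only [Set.mem_insert_iff, Set.mem_singleton_iff]
  omega

end HSCantor
end
end
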